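/- arXiv:1609.05879 — 5 statements merged into one kernel-verified Lean document; each statement's English description precedes it below -/
import Mathlib

section
/- Let T₁, T₂ > 0. For every t ∈ ℝ one has p(t) − p(t − T₂) − p(t − T₁) + p(t − T₂ − T₁) = A₁ ∫_{t−T₂}^{t} ∫_{σ−T₁}^{σ} p(τ) dτ dσ + A₂ ∫_{t−T₂}^{t} ( p(σ) − p(σ − T₁) ) dσ + B ∫_{t−T₂}^{t} ∫_{σ−T₁}^{σ} u(τ) dτ dσ. -/
/-! Integrating `q̇ = A₁ p + A₂ q + B u` over the window `[σ - T₁, σ]` and using `ṗ = q` gives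
`q σ - q (σ - T₁) = A₁ ∫ p + A₂ (p σ - p (σ - T₁)) + B ∫ u`. Integrating this identity once more
over `[t - T₂, t]` turns its left side into the second difference of `p`. -/

open intervalIntegral

section

variable {E F : Type*} [NormedAddCommGroup E] [NormedSpace ℝ E] [NormedAddCommGroup F]
  [NormedSpace ℝ F]

theorem continuous_intervalIntegral_sub_const {f : ℝ → E} (hf : Continuous f) (T : ℝ) :
    Continuous fun σ ↦ ∫ τ in (σ - T)..σ, f τ := by
  have hF : Continuous fun b ↦ ∫ τ in (0 : ℝ)..b, f τ :=
    continuous_primitive (fun _ _ ↦ hf.intervalIntegrable _ _) 0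
  have hwindow : (fun σ ↦ ∫ τ in (σ - T)..σ, f τ) =
      fun σ ↦ (∫ τ in (0 : ℝ)..σ, f τ) - ∫ τ in (0 : ℝ)..(σ - T), f τ :=
    funext fun σ ↦ (integral_interval_sub_left (hf.intervalIntegrable _ _)
      (hf.intervalIntegrable _ _)).symm
  rw [hwindow]
  exact hF.sub (hF.comp (continuous_sub_right T))

theorem ContinuousLinearMap.intervalIntegrable_comp (L : E →L[ℝ] F) {f : ℝ → E} {a b : ℝ}
    (hf : IntervalIntegrable f MeasureTheory.volume a b) :
    IntervalIntegrable (fun x ↦ L (f x)) MeasureTheory.volume a b :=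
  ⟨L.integrable_comp hf.1, L.integrable_comp hf.2⟩

variable [CompleteSpace E] [CompleteSpace F]

theorem integral_clm_add_clm_add_clm (L₁ L₂ : E →L[ℝ] E) (K : F →L[ℝ] E) {f g : ℝ → E}
    {h : ℝ → F} {a b : ℝ} (hf : IntervalIntegrable f MeasureTheory.volume a b)
    (hg : IntervalIntegrable g MeasureTheory.volume a b)
    (hh : IntervalIntegrable h MeasureTheory.volume a b) :
    ∫ x in a..b, (L₁ (f x) + L₂ (g x) + K (h x)) =
      L₁ (∫ x in a..b, f x) + L₂ (∫ x in a..b, g x) + K (∫ x in a..b, h x) := by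
  rw [integral_add ((L₁.intervalIntegrable_comp hf).add (L₂.intervalIntegrable_comp hg))
      (K.intervalIntegrable_comp hh), integral_add (L₁.intervalIntegrable_comp hf)
      (L₂.intervalIntegrable_comp hg), L₁.intervalIntegral_comp_comm hf,
    L₂.intervalIntegral_comp_comm hg, K.intervalIntegral_comp_comm hh]

theorem integral_sub_comp_sub_const_of_hasDerivAt {f f' : ℝ → E}
    (hf : ∀ x, HasDerivAt f (f' x) x) (hf' : Continuous f') (T a b : ℝ) :
    ∫ σ in a..b, (f' σ - f' (σ - T)) = (f b - f (b - T)) - (f a - f (a - T)) := by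
  refine integral_eq_sub_of_hasDerivAt (f := fun σ ↦ f σ - f (σ - T)) (fun σ _ ↦ (hf σ).sub ?_)
    ((hf'.sub (hf'.comp (continuous_sub_right T))).intervalIntegrable _ _)
  simpa using (hf (σ - T)).comp_sub_const σ T

variable (L₁ L₂ : E →L[ℝ] E) (K : F →L[ℝ] E) {p q : ℝ → E} {u : ℝ → F}

theorem sub_comp_sub_const_eq_of_secondOrder (hp : ∀ t, HasDerivAt p (q t) t)
    (hq : ∀ t, HasDerivAt q (L₁ (p t) + L₂ (q t) + K (u t)) t) (hu : Continuous u) (T σ : ℝ) :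
    q σ - q (σ - T) =
      L₁ (∫ τ in (σ - T)..σ, p τ) + L₂ (p σ - p (σ - T)) + K (∫ τ in (σ - T)..σ, u τ) := by
  have hpc : Continuous p := Differentiable.continuous fun t ↦ (hp t).differentiableAt
  have hqc : Continuous q := Differentiable.continuous fun t ↦ (hq t).differentiableAt
  rw [← integral_eq_sub_of_hasDerivAt (fun t _ ↦ hp t) (hqc.intervalIntegrable _ _),
    ← integral_clm_add_clm_add_clm L₁ L₂ K (hpc.intervalIntegrable _ _)
      (hqc.intervalIntegrable _ _) (hu.intervalIntegrable _ _)]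
  exact (integral_eq_sub_of_hasDerivAt (fun t _ ↦ hq t)
    ((by fun_prop : Continuous fun t ↦ L₁ (p t) + L₂ (q t) + K (u t)).intervalIntegrable _ _)).symm

theorem secondOrder_integral_form (hp : ∀ t, HasDerivAt p (q t) t)
    (hq : ∀ t, HasDerivAt q (L₁ (p t) + L₂ (q t) + K (u t)) t) (hu : Continuous u)
    (T₁ T₂ t : ℝ) :
    p t - p (t - T₂) - p (t - T₁) + p (t - T₂ - T₁) =
      L₁ (∫ σ in (t - T₂)..t, ∫ τ in (σ - T₁)..σ, p τ) +
        L₂ (∫ σ in (t - T₂)..t, (p σ - p (σ - T₁))) +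
          K (∫ σ in (t - T₂)..t, ∫ τ in (σ - T₁)..σ, u τ) := by
  have hpc : Continuous p := Differentiable.continuous fun t ↦ (hp t).differentiableAt
  have hqc : Continuous q := Differentiable.continuous fun t ↦ (hq t).differentiableAt
  calc p t - p (t - T₂) - p (t - T₁) + p (t - T₂ - T₁)
      = ∫ σ in (t - T₂)..t, (q σ - q (σ - T₁)) := by
        rw [integral_sub_comp_sub_const_of_hasDerivAt hp hqc]; abel
    _ = ∫ σ in (t - T₂)..t, (L₁ (∫ τ in (σ - T₁)..σ, p τ) + L₂ (p σ - p (σ - T₁)) +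
          K (∫ τ in (σ - T₁)..σ, u τ)) := by
        simp_rw [sub_comp_sub_const_eq_of_secondOrder L₁ L₂ K hp hq hu]
    _ = _ := integral_clm_add_clm_add_clm L₁ L₂ K
        ((continuous_intervalIntegral_sub_const hpc T₁).intervalIntegrable _ _)
        ((hpc.sub (hpc.comp (continuous_sub_right T₁))).intervalIntegrable _ _)
        ((continuous_intervalIntegral_sub_const hu T₁).intervalIntegrable _ _)

end

theorem integral_form_second_order_general {n m : ℕ}
    (A₁ A₂ : Matrix (Fin n) (Fin n) ℝ) (B : Matrix (Fin n) (Fin m) ℝ)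
    (p q : ℝ → Fin n → ℝ) (u : ℝ → Fin m → ℝ)
    (hp : ∀ t, HasDerivAt p (q t) t)
    (hq : ∀ t, HasDerivAt q (A₁.mulVec (p t) + A₂.mulVec (q t) + B.mulVec (u t)) t)
    (hu : Continuous u)
    (T₁ T₂ : ℝ) (t : ℝ) :
    p t - p (t - T₂) - p (t - T₁) + p (t - T₂ - T₁) =
      A₁.mulVec (∫ σ in (t - T₂)..t, ∫ τ in (σ - T₁)..σ, p τ) +
        A₂.mulVec (∫ σ in (t - T₂)..t, (p σ - p (σ - T₁))) +
          B.mulVec (∫ σ in (t - T₂)..t, ∫ τ in (σ - T₁)..σ, u τ) :=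
  secondOrder_integral_form A₁.mulVecLin.toContinuousLinearMap A₂.mulVecLin.toContinuousLinearMap
    B.mulVecLin.toContinuousLinearMap hp hq hu T₁ T₂ t

/-- For the second-order linear system `ṗ = q`, `q̇ = A₁ p + A₂ q + B u` (with `p, q`
differentiable and `u` continuous), for every `T₁, T₂ > 0` and every `t ∈ ℝ`,
`p(t) − p(t−T₂) − p(t−T₁) + p(t−T₂−T₁) = A₁ ∫_{t−T₂}^{t} ∫_{σ−T₁}^{σ} p dτ dσ
 + A₂ ∫_{t−T₂}^{t} (p(σ) − p(σ−T₁)) dσ + B ∫_{t−T₂}^{t} ∫_{σ−T₁}^{σ} u dτ dσ`. -/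
theorem integral_form_second_order {n m : ℕ}
    (A₁ A₂ : Matrix (Fin n) (Fin n) ℝ) (B : Matrix (Fin n) (Fin m) ℝ)
    (p q : ℝ → Fin n → ℝ) (u : ℝ → Fin m → ℝ)
    (hp : ∀ t, HasDerivAt p (q t) t)
    (hq : ∀ t, HasDerivAt q (A₁.mulVec (p t) + A₂.mulVec (q t) + B.mulVec (u t)) t)
    (hu : Continuous u)
    (T₁ T₂ : ℝ) (hT₁ : 0 < T₁) (hT₂ : 0 < T₂) (t : ℝ) :
    p t - p (t - T₂) - p (t - T₁) + p (t - T₂ - T₁) =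
      A₁.mulVec (∫ σ in (t - T₂)..t, ∫ τ in (σ - T₁)..σ, p τ) +
        A₂.mulVec (∫ σ in (t - T₂)..t, (p σ - p (σ - T₁))) +
          B.mulVec (∫ σ in (t - T₂)..t, ∫ τ in (σ - T₁)..σ, u τ) :=
  integral_form_second_order_general A₁ A₂ B p q u hp hq hu T₁ T₂ t
end

section
/- Suppose θ̃ : ℝ → ℝᴺ is differentiable and satisfies θ̃'(t) = −k_θ Γ(t) 𝒢(t) θ̃(t), where Γ : ℝ → ℝ^{N×N} is differentiable, symmetric and invertible for all t, satisfies Γ̇(t) = β₁ Γ(t) − k_θ Γ(t) 𝒢(t) Γ(t), and 𝒢(t) ∈ ℝ^{N×N} is symmetric for all t. Then the function V_θ(t) := (1/2) θ̃(t)ᵀ Γ(t)⁻¹ θ̃(t) is differentiable with V_θ'(t) = −(k_θ/2) θ̃(t)ᵀ 𝒢(t) θ̃(t) − (β₁/2) θ̃(t)ᵀ Γ(t)⁻¹ θ̃(t). -/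
open scoped Matrix

attribute [local instance] Matrix.normedAddCommGroup Matrix.normedSpace

/-! The derivative `-Γ⁻¹ Γ' Γ⁻¹` of inversion turns the Riccati-type law for `Γ` into the affine
law `(Γ⁻¹)' = k_θ 𝒢 - β₁ Γ⁻¹`. As `Γ⁻¹` is symmetric, the product rule gives
`V_θ' = θ̃ᵀ Γ⁻¹ θ̃' + ½ θ̃ᵀ (Γ⁻¹)' θ̃`, and `Γ⁻¹ θ̃' = -k_θ 𝒢 θ̃`. -/

theorem HasDerivAt.ringInverse {𝕜 R : Type*} [NontriviallyNormedField 𝕜] [NormedRing R]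
    [NormedAlgebra 𝕜 R] [CompleteSpace R] {f : 𝕜 → R} {f' : R} {t : 𝕜}
    (hf : HasDerivAt f f' t) (hft : IsUnit (f t)) :
    HasDerivAt (fun s => Ring.inverse (f s))
      (-(Ring.inverse (f t) * f' * Ring.inverse (f t))) t := by
  obtain ⟨u, hu⟩ := hft
  rw [← hu, Ring.inverse_unit]
  exact (hasFDerivAt_ringInverse (𝕜 := 𝕜) u).comp_hasDerivAt_of_eq t hf hu

namespace Matrix

variable {𝕜 : Type*} [NontriviallyNormedField 𝕜] [CompleteSpace 𝕜] {n : Type*} [Fintype n]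
  [DecidableEq n] {t : 𝕜}

theorem hasDerivAt_inv {A : 𝕜 → Matrix n n 𝕜} {A' : Matrix n n 𝕜}
    (hA : HasDerivAt A A' t) (hAt : IsUnit (A t)) :
    HasDerivAt (fun s => (A s)⁻¹) (-((A t)⁻¹ * A' * (A t)⁻¹)) t := by
  -- Any norm will do: `HasDerivAt` only sees the topology, so borrow the operator norm.
  have : CompleteSpace (Matrix n n 𝕜) := FiniteDimensional.complete 𝕜 _
  simp only [nonsing_inv_eq_ringInverse]
  exact @HasDerivAt.ringInverse _ _ _ Matrix.linftyOpNormedRing Matrix.linftyOpNormedAlgebra this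
    _ _ _ hA hAt

theorem hasDerivAt_inv_of_riccati {A : 𝕜 → Matrix n n 𝕜} {G : Matrix n n 𝕜} {β k : 𝕜}
    (hA : HasDerivAt A (β • A t - k • (A t * G * A t)) t) (hAt : IsUnit (A t)) :
    HasDerivAt (fun s => (A s)⁻¹) (k • G - β • (A t)⁻¹) t := by
  have hdet := (isUnit_iff_isUnit_det _).1 hAt
  refine (hasDerivAt_inv hA hAt).congr_deriv ?_
  simp only [Matrix.mul_sub, Matrix.sub_mul, Matrix.mul_smul, Matrix.smul_mul, Matrix.mul_assoc,
    nonsing_inv_mul_cancel_left _ _ hdet, mul_nonsing_inv _ hdet, Matrix.mul_one]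
  abel

end Matrix

section

variable {𝕜 : Type*} [NontriviallyNormedField 𝕜] {m n : Type*} [Fintype n] {t : 𝕜}

theorem HasDerivAt.dotProduct {u v : 𝕜 → n → 𝕜} {u' v' : n → 𝕜}
    (hu : HasDerivAt u u' t) (hv : HasDerivAt v v' t) :
    HasDerivAt (fun s => u s ⬝ᵥ v s) (u' ⬝ᵥ v t + u t ⬝ᵥ v') t := by
  refine (HasDerivAt.fun_sum fun i _ => (hasDerivAt_pi.1 hu i).mul (hasDerivAt_pi.1 hv i))
    |>.congr_deriv ?_
  exact Finset.sum_add_distrib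

theorem HasDerivAt.mulVec [Fintype m] {M : 𝕜 → Matrix m n 𝕜} {v : 𝕜 → n → 𝕜}
    {M' : Matrix m n 𝕜} {v' : n → 𝕜} (hM : HasDerivAt M M' t) (hv : HasDerivAt v v' t) :
    HasDerivAt (fun s => M s *ᵥ v s) (M' *ᵥ v t + M t *ᵥ v') t :=
  hasDerivAt_pi.2 fun i => (hasDerivAt_pi.1 hM i).dotProduct hv

theorem HasDerivAt.dotProduct_mulVec_self {u : 𝕜 → n → 𝕜} {M : 𝕜 → Matrix n n 𝕜} {u' : n → 𝕜}
    {M' : Matrix n n 𝕜} (hu : HasDerivAt u u' t) (hM : HasDerivAt M M' t) (hMt : (M t).IsSymm) :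
    HasDerivAt (fun s => u s ⬝ᵥ M s *ᵥ u s) (2 * (u t ⬝ᵥ M t *ᵥ u') + u t ⬝ᵥ M' *ᵥ u t) t := by
  refine (hu.dotProduct (hM.mulVec hu)).congr_deriv ?_
  have hswap : u' ⬝ᵥ M t *ᵥ u t = u t ⬝ᵥ M t *ᵥ u' := by
    rw [dotProduct_comm, Matrix.dotProduct_mulVec, ← Matrix.mulVec_transpose, hMt.eq]
  rw [hswap, dotProduct_add]
  ring

end

theorem deriv_Vtheta_general {N : ℕ}
    (θt : ℝ → Fin N → ℝ) (Γ 𝒢 : ℝ → Matrix (Fin N) (Fin N) ℝ) (β₁ kθ : ℝ)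
    (hΓsymm : ∀ t, (Γ t).IsSymm) (hΓinv : ∀ t, IsUnit (Γ t))
    (hΓ : ∀ t, HasDerivAt Γ (β₁ • Γ t - kθ • (Γ t * 𝒢 t * Γ t)) t)
    (hθt : ∀ t, HasDerivAt θt (-(kθ • (Γ t).mulVec ((𝒢 t).mulVec (θt t)))) t) :
    ∀ t, HasDerivAt (fun s => (1 / 2) * (θt s ⬝ᵥ ((Γ s)⁻¹).mulVec (θt s)))
      (-(kθ / 2) * (θt t ⬝ᵥ (𝒢 t).mulVec (θt t))
        - (β₁ / 2) * (θt t ⬝ᵥ ((Γ t)⁻¹).mulVec (θt t))) t := by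
  intro t
  have hΓinv_deriv := Matrix.hasDerivAt_inv_of_riccati (hΓ t) (hΓinv t)
  have hV := (hθt t).dotProduct_mulVec_self hΓinv_deriv (hΓsymm t).inv
  refine (hV.const_mul (1 / 2)).congr_deriv ?_
  have hcancel : (Γ t)⁻¹ *ᵥ (Γ t *ᵥ (𝒢 t *ᵥ θt t)) = 𝒢 t *ᵥ θt t := by
    rw [Matrix.mulVec_mulVec,
      Matrix.nonsing_inv_mul _ ((Matrix.isUnit_iff_isUnit_det _).1 (hΓinv t)), Matrix.one_mulVec]
  simp only [Matrix.mulVec_neg, Matrix.mulVec_smul, hcancel, Matrix.sub_mulVec,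
    Matrix.smul_mulVec, dotProduct_neg, dotProduct_sub, dotProduct_smul, smul_eq_mul]
  ring

/-- If `θ̃' = −k_θ Γ 𝒢 θ̃` where `Γ` is differentiable, symmetric, invertible and satisfies
`Γ̇ = β₁ Γ − k_θ Γ 𝒢 Γ`, and `𝒢(t)` is symmetric, then
`V_θ(t) = (1/2) θ̃(t)ᵀ Γ(t)⁻¹ θ̃(t)` is differentiable with
`V_θ'(t) = −(k_θ/2) θ̃(t)ᵀ 𝒢(t) θ̃(t) − (β₁/2) θ̃(t)ᵀ Γ(t)⁻¹ θ̃(t)`. -/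
theorem deriv_Vtheta {N : ℕ}
    (θt : ℝ → Fin N → ℝ) (Γ 𝒢 : ℝ → Matrix (Fin N) (Fin N) ℝ) (β₁ kθ : ℝ)
    (hΓsymm : ∀ t, (Γ t).IsSymm) (hΓinv : ∀ t, IsUnit (Γ t))
    (hΓ : ∀ t, HasDerivAt Γ (β₁ • Γ t - kθ • (Γ t * 𝒢 t * Γ t)) t)
    (h𝒢symm : ∀ t, (𝒢 t).IsSymm)
    (hθt : ∀ t, HasDerivAt θt (-(kθ • (Γ t).mulVec ((𝒢 t).mulVec (θt t)))) t) :
    ∀ t, HasDerivAt (fun s => (1 / 2) * (θt s ⬝ᵥ ((Γ s)⁻¹).mulVec (θt s)))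
      (-(kθ / 2) * (θt t ⬝ᵥ (𝒢 t).mulVec (θt t))
        - (β₁ / 2) * (θt t ⬝ᵥ ((Γ t)⁻¹).mulVec (θt t))) t :=
  deriv_Vtheta_general θt Γ 𝒢 β₁ kθ hΓsymm hΓinv hΓ hθt
end

section
/- Suppose p̃, η, r : ℝ → ℝⁿ are differentiable and satisfy p̃'(t) = q̃(t), η'(t) = −β η(t) − k r(t) − α q̃(t), and r'(t) = Y(t) θ̃(t) − p̃(t) + (k+α) η(t) − k r(t), where q̃(t) := r(t) − α p̃(t) − η(t) and α, β, k ∈ ℝ. Then V_r(t) := (1/2)(‖p̃(t)‖² + ‖η(t)‖² + ‖r(t)‖²) is differentiable and satisfies, for all t, V_r'(t) = −α‖p̃(t)‖² − (β − α)‖η(t)‖² − k‖r(t)‖² + (α² − 1) p̃(t)ᵀ η(t) + r(t)ᵀ Y(t) θ̃(t); in particular, if moreover ‖Y(t) θ̃(t)‖ ≤ c for all t, then V_r'(t) ≤ −α‖p̃(t)‖² − (β − α)‖η(t)‖² + |1 − α²|·‖p̃(t)‖·‖η(t)‖ − k‖r(t)‖² + c‖r(t)‖. -/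
/-!
Differentiating `V_r` gives `⟪p̃, p̃'⟫ + ⟪η, η'⟫ + ⟪r, r'⟫`; substituting the error dynamics and
`q̃ = r − αp̃ − η`, the cross terms `⟪p̃, r⟫` and `⟪η, r⟫` cancel, which leaves the stated
expression. The inequality then follows from Cauchy–Schwarz applied to the two remaining
cross terms `⟪p̃, η⟫` and `⟪r, Yθ̃⟫`.
-/

open RealInnerProductSpace

section

variable {E : Type*} [NormedAddCommGroup E] [InnerProductSpace ℝ E]

theorem HasDerivAt.half_norm_sq_add_norm_sq_add_norm_sq {f g h : ℝ → E} {f' g' h' : E} {t : ℝ}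
    (hf : HasDerivAt f f' t) (hg : HasDerivAt g g' t) (hh : HasDerivAt h h' t) :
    HasDerivAt (fun s => (1 / 2) * (‖f s‖ ^ 2 + ‖g s‖ ^ 2 + ‖h s‖ ^ 2))
      (⟪f t, f'⟫ + ⟪g t, g'⟫ + ⟪h t, h'⟫) t := by
  refine (((hf.norm_sq.add hg.norm_sq).add hh.norm_sq).const_mul (1 / 2 : ℝ)).congr_deriv ?_
  ring

theorem inner_observer_error_dynamics (p η r w : E) (α β k : ℝ) :
    ⟪p, r - α • p - η⟫ + ⟪η, -β • η - k • r - α • (r - α • p - η)⟫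
        + ⟪r, w - p + (k + α) • η - k • r⟫ =
      -α * ‖p‖ ^ 2 - (β - α) * ‖η‖ ^ 2 - k * ‖r‖ ^ 2 + (α ^ 2 - 1) * ⟪p, η⟫ + ⟪r, w⟫ := by
  simp only [inner_sub_right, inner_add_right, inner_smul_right, inner_neg_right,
    neg_smul, real_inner_self_eq_norm_sq]
  rw [real_inner_comm r p, real_inner_comm r η, real_inner_comm η p]
  ring

theorem mul_inner_le_abs_mul_norm_mul_norm (a : ℝ) (x y : E) :
    a * ⟪x, y⟫ ≤ |a| * ‖x‖ * ‖y‖ :=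
  calc a * ⟪x, y⟫ ≤ |a * ⟪x, y⟫| := le_abs_self _
    _ = |a| * |⟪x, y⟫| := abs_mul _ _
    _ ≤ |a| * (‖x‖ * ‖y‖) := by gcongr; exact abs_real_inner_le_norm x y
    _ = |a| * ‖x‖ * ‖y‖ := (mul_assoc _ _ _).symm

theorem inner_le_mul_norm_of_norm_le {x y : E} {c : ℝ} (hy : ‖y‖ ≤ c) : ⟪x, y⟫ ≤ c * ‖x‖ :=
  calc ⟪x, y⟫ ≤ ‖x‖ * ‖y‖ := real_inner_le_norm x y
    _ ≤ ‖x‖ * c := by gcongr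
    _ = c * ‖x‖ := mul_comm _ _

end

/-- For the observer error dynamics `p̃' = q̃`, `η' = −βη − kr − αq̃`,
`r' = Yθ̃ − p̃ + (k+α)η − kr`, with `q̃ = r − αp̃ − η`, the function
`V_r = (1/2)(‖p̃‖² + ‖η‖² + ‖r‖²)` is differentiable with
`V_r' = −α‖p̃‖² − (β−α)‖η‖² − k‖r‖² + (α²−1)⟪p̃,η⟫ + ⟪r, Yθ̃⟫`;
if moreover `‖Yθ̃‖ ≤ c`, then
`V_r' ≤ −α‖p̃‖² − (β−α)‖η‖² + |1−α²|‖p̃‖‖η‖ − k‖r‖² + c‖r‖`. -/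
theorem deriv_Vr {n N : ℕ}
    (pt η r : ℝ → EuclideanSpace ℝ (Fin n))
    (Y : ℝ → Matrix (Fin n) (Fin N) ℝ) (θt : ℝ → EuclideanSpace ℝ (Fin N))
    (α β k c : ℝ)
    (qt : ℝ → EuclideanSpace ℝ (Fin n))
    (hqdef : ∀ t, qt t = r t - α • pt t - η t)
    (hp : ∀ t, HasDerivAt pt (qt t) t)
    (hη : ∀ t, HasDerivAt η (-β • η t - k • r t - α • qt t) t)
    (hr : ∀ t, HasDerivAt r
      (Matrix.toEuclideanLin (Y t) (θt t) - pt t + (k + α) • η t - k • r t) t) :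
    (∀ t, HasDerivAt (fun s => (1 / 2) * (‖pt s‖ ^ 2 + ‖η s‖ ^ 2 + ‖r s‖ ^ 2))
      (-α * ‖pt t‖ ^ 2 - (β - α) * ‖η t‖ ^ 2 - k * ‖r t‖ ^ 2
        + (α ^ 2 - 1) * (inner ℝ (pt t) (η t) : ℝ)
        + (inner ℝ (r t) (Matrix.toEuclideanLin (Y t) (θt t)) : ℝ)) t)
    ∧ ((∀ t, ‖Matrix.toEuclideanLin (Y t) (θt t)‖ ≤ c) →
        ∀ t, deriv (fun s => (1 / 2) * (‖pt s‖ ^ 2 + ‖η s‖ ^ 2 + ‖r s‖ ^ 2)) t ≤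
          -α * ‖pt t‖ ^ 2 - (β - α) * ‖η t‖ ^ 2 + |1 - α ^ 2| * ‖pt t‖ * ‖η t‖
            - k * ‖r t‖ ^ 2 + c * ‖r t‖) := by
  have hV : ∀ t, HasDerivAt (fun s => (1 / 2) * (‖pt s‖ ^ 2 + ‖η s‖ ^ 2 + ‖r s‖ ^ 2))
      (-α * ‖pt t‖ ^ 2 - (β - α) * ‖η t‖ ^ 2 - k * ‖r t‖ ^ 2
        + (α ^ 2 - 1) * (inner ℝ (pt t) (η t) : ℝ)
        + (inner ℝ (r t) (Matrix.toEuclideanLin (Y t) (θt t)) : ℝ)) t := by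
    intro t
    rw [← inner_observer_error_dynamics, ← hqdef]
    exact (hp t).half_norm_sq_add_norm_sq_add_norm_sq (hη t) (hr t)
  refine ⟨hV, fun hc t => ?_⟩
  have hpη := mul_inner_le_abs_mul_norm_mul_norm (α ^ 2 - 1) (pt t) (η t)
  rw [abs_sub_comm] at hpη
  have hrY := inner_le_mul_norm_of_norm_le (x := r t) (hc t)
  rw [(hV t).deriv]
  linarith
end

section
/- (Lemma 2.) Suppose p̃, η, r : [t₀, ∞) → ℝⁿ are differentiable and satisfy p̃'(t) = q̃(t), η'(t) = −β η(t) − k r(t) − α q̃(t), and r'(t) = Y(t) θ̃(t) − p̃(t) + (k+α) η(t) − k r(t), where q̃(t) := r(t) − α p̃(t) − η(t), the gains satisfy α > 0, k > 0, and β > (1 + α²)²/(4α), and there is a constant c ≥ 0 with ‖Y(t) θ̃(t)‖ ≤ c for all t. Let Q_r = [[α, −|1 − α²|/2], [−|1 − α²|/2, β − α]], let ϖ_r := min{ 2 λ_min(Q_r), k }, and let V_r(t) := (1/2)(‖p̃(t)‖² + ‖η(t)‖² + ‖r(t)‖²). Then for all t ≥ t₀, V_r(t) ≤ max{ V_r(t₀),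 c²/(2 k ϖ_r) }; in particular p̃, q̃, η, and r are bounded on [t₀, ∞). -/
/-!
`V_r` is a Lyapunov function for the error dynamics. Along trajectories
`V_r' = -α‖p̃‖² - (β - α)‖η‖² - k‖r‖² + (α² - 1)⟪p̃, η⟫ + ⟪r, Yθ̃⟫`. The first four terms are
bounded by `-(‖p̃‖, ‖η‖) Q_r (‖p̃‖, ‖η‖)ᵀ - k‖r‖² ≤ -λ_min(Q_r)(‖p̃‖² + ‖η‖²) - k‖r‖²`, and the
condition on `β` says exactly that `det Q_r > 0`, so `λ_min(Q_r) > 0`. Young's inequality absorbs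
the bounded input, `⟪r, Yθ̃⟫ ≤ (k/2)‖r‖² + c²/(2k)`, hence `V_r' ≤ -ϖ_r V_r + c²/(2k)`, and Grönwall's
inequality gives `V_r(t) ≤ e^{-ϖ_r(t-t₀)} V_r(t₀) + (1 - e^{-ϖ_r(t-t₀)}) c²/(2kϖ_r)`.
-/

open Set
open scoped InnerProductSpace

section Rayleigh

variable {E : Type*} [NormedAddCommGroup E] [InnerProductSpace ℝ E]

/-- For self-adjoint `T` this is the least eigenvalue of `T`. -/
noncomputable def minRayleigh (T : E →ₗ[ℝ] E) : ℝ :=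
  sInf ((fun x => ⟪x, T x⟫_ℝ) '' {x | ‖x‖ = 1})

theorem bddBelow_inner_apply_self_sphere [FiniteDimensional ℝ E] (T : E →ₗ[ℝ] E) :
    BddBelow ((fun x => ⟪x, T x⟫_ℝ) '' {x | ‖x‖ = 1}) := by
  refine ⟨-‖LinearMap.toContinuousLinearMap T‖, ?_⟩
  rintro _ ⟨x, hx : ‖x‖ = 1, rfl⟩
  have hT := (LinearMap.toContinuousLinearMap T).le_opNorm x
  have hCS := abs_real_inner_le_norm x (T x)
  simp only [LinearMap.coe_toContinuousLinearMap', hx, mul_one] at hT hCS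
  linarith [neg_abs_le ⟪x, T x⟫_ℝ]

theorem minRayleigh_mul_norm_sq_le [FiniteDimensional ℝ E] (T : E →ₗ[ℝ] E) (x : E) :
    minRayleigh T * ‖x‖ ^ 2 ≤ ⟪x, T x⟫_ℝ := by
  rcases eq_or_ne x 0 with rfl | hx
  · simp
  have hx' : ‖x‖ ≠ 0 := norm_ne_zero_iff.mpr hx
  have hunit : ‖‖x‖⁻¹ • x‖ = 1 := by
    rw [norm_smul, norm_inv, norm_norm, inv_mul_cancel₀ hx']
  have hle : minRayleigh T ≤ ⟪‖x‖⁻¹ • x, T (‖x‖⁻¹ • x)⟫_ℝ :=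
    csInf_le (bddBelow_inner_apply_self_sphere T) ⟨_, hunit, rfl⟩
  rw [map_smul, real_inner_smul_left, real_inner_smul_right] at hle
  calc minRayleigh T * ‖x‖ ^ 2 ≤ ‖x‖⁻¹ * (‖x‖⁻¹ * ⟪x, T x⟫_ℝ) * ‖x‖ ^ 2 := by gcongr
    _ = ⟪x, T x⟫_ℝ := by field_simp

end Rayleigh

theorem EuclideanSpace.norm_sq_fin_two (x : EuclideanSpace ℝ (Fin 2)) :
    ‖x‖ ^ 2 = x 0 ^ 2 + x 1 ^ 2 := by
  simp [EuclideanSpace.norm_sq_eq, Fin.sum_univ_two]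

theorem inner_toEuclideanLin_fin_two (a b d : ℝ) (x : EuclideanSpace ℝ (Fin 2)) :
    ⟪x, Matrix.toEuclideanLin !![a, b; b, d] x⟫_ℝ =
      a * x 0 ^ 2 + 2 * b * x 0 * x 1 + d * x 1 ^ 2 := by
  simp [PiLp.inner_apply, Fin.sum_univ_two, Matrix.toLpLin_apply, dotProduct]
  ring

theorem minRayleigh_fin_two_mul_le (a b d u v : ℝ) :
    minRayleigh (Matrix.toEuclideanLin !![a, b; b, d]) * (u ^ 2 + v ^ 2) ≤
      a * u ^ 2 + 2 * b * u * v + d * v ^ 2 := by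
  have := minRayleigh_mul_norm_sq_le (Matrix.toEuclideanLin !![a, b; b, d]) !₂[u, v]
  rw [EuclideanSpace.norm_sq_fin_two, inner_toEuclideanLin_fin_two] at this
  simpa using this

theorem det_div_trace_mul_sq_add_sq_le {a b d : ℝ} (ha : 0 < a) (had : 0 < a + d) (u v : ℝ) :
    (a * d - b ^ 2) / (a + d) * (u ^ 2 + v ^ 2) ≤ a * u ^ 2 + 2 * b * u * v + d * v ^ 2 := by
  set ε := (a * d - b ^ 2) / (a + d)
  have hε : ε * (a + d) = a * d - b ^ 2 := div_mul_cancel₀ _ had.ne'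
  -- `(a - ε)(d - ε) = b² + ε²`: the shifted form has nonpositive discriminant.
  have hdisc : b ^ 2 ≤ (a - ε) * (d - ε) := by nlinarith [sq_nonneg ε]
  have haε : 0 < a - ε := by
    have : (a - ε) * (a + d) = a ^ 2 + b ^ 2 := by linear_combination -hε
    nlinarith [sq_nonneg b]
  nlinarith [sq_nonneg ((a - ε) * u + b * v), mul_nonneg (sub_nonneg.2 hdisc) (sq_nonneg v)]

theorem minRayleigh_fin_two_pos {a b d : ℝ} (ha : 0 < a) (hd : 0 < d) (hdet : b ^ 2 < a * d) :
    0 < minRayleigh (Matrix.toEuclideanLin !![a, b; b, d]) := by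
  have hε : 0 < (a * d - b ^ 2) / (a + d) := div_pos (by linarith) (by linarith)
  refine hε.trans_le (le_csInf ⟨_, ⟨EuclideanSpace.single 0 1, by simp, rfl⟩⟩ ?_)
  rintro _ ⟨x, hx : ‖x‖ = 1, rfl⟩
  have := det_div_trace_mul_sq_add_sq_le (b := b) ha (add_pos ha hd) (x 0) (x 1)
  rw [← EuclideanSpace.norm_sq_fin_two, hx] at this
  simp only [inner_toEuclideanLin_fin_two]
  linarith

section Comparison

variable {V V' : ℝ → ℝ} {t₀ ϖ γ : ℝ}

theorem le_exp_decay_of_hasDerivWithinAt_le (hϖ : ϖ ≠ 0)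
    (hV : ∀ t ∈ Ici t₀, HasDerivWithinAt V (V' t) (Ici t₀) t)
    (hV' : ∀ t ∈ Ici t₀, V' t ≤ -ϖ * V t + γ) (t : ℝ) (ht : t ∈ Ici t₀) :
    V t ≤ V t₀ * Real.exp (-ϖ * (t - t₀)) + γ / ϖ * (1 - Real.exp (-ϖ * (t - t₀))) := by
  have hcont : ContinuousOn V (Icc t₀ t) := fun x hx =>
    (hV x hx.1).continuousWithinAt.mono Icc_subset_Ici_self
  have hslope : ∀ x ∈ Ico t₀ t, ∀ r, V' x < r →
      ∃ᶠ z in nhdsWithin x (Ioi x), (z - x)⁻¹ * (V z - V x) < r :=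
    fun x hx _ hr => ((hV x hx.1).mono (Ici_subset_Ici.2 hx.1)).liminf_right_slope_le hr
  have := le_gronwallBound_of_liminf_deriv_right_le hcont hslope le_rfl
    (fun x hx => hV' x hx.1) t ⟨ht, le_rfl⟩
  rw [gronwallBound_of_K_ne_0 (neg_ne_zero.2 hϖ)] at this
  convert this using 1
  field_simp
  ring

theorem le_max_of_hasDerivWithinAt_le (hϖ : 0 < ϖ)
    (hV : ∀ t ∈ Ici t₀, HasDerivWithinAt V (V' t) (Ici t₀) t)
    (hV' : ∀ t ∈ Ici t₀, V' t ≤ -ϖ * V t + γ) (t : ℝ) (ht : t ∈ Ici t₀) :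
    V t ≤ max (V t₀) (γ / ϖ) := by
  set e := Real.exp (-ϖ * (t - t₀))
  have he₀ : 0 ≤ e := (Real.exp_pos _).le
  have he₁ : e ≤ 1 := Real.exp_le_one_iff.2 (by nlinarith [mem_Ici.1 ht])
  have he₁' : 0 ≤ 1 - e := sub_nonneg.2 he₁
  calc V t ≤ V t₀ * e + γ / ϖ * (1 - e) :=
        le_exp_decay_of_hasDerivWithinAt_le hϖ.ne' hV hV' t ht
    _ ≤ max (V t₀) (γ / ϖ) * e + max (V t₀) (γ / ϖ) * (1 - e) := by
        gcongr
        · exact le_max_left _ _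
        · exact le_max_right _ _
    _ = max (V t₀) (γ / ϖ) := by ring

end Comparison

section Energy

variable {E : Type*} [NormedAddCommGroup E] [InnerProductSpace ℝ E]

theorem HasDerivWithinAt.half_norm_sq_add_add {p η r : ℝ → E} {p' η' r' : E} {s : Set ℝ}
    {t : ℝ} (hp : HasDerivWithinAt p p' s t) (hη : HasDerivWithinAt η η' s t)
    (hr : HasDerivWithinAt r r' s t) :
    HasDerivWithinAt (fun t => (1 / 2) * (‖p t‖ ^ 2 + ‖η t‖ ^ 2 + ‖r t‖ ^ 2))
      (⟪p t, p'⟫_ℝ + ⟪η t, η'⟫_ℝ + ⟪r t, r'⟫_ℝ) s t :=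
  (((hp.norm_sq.add hη.norm_sq).add hr.norm_sq).const_mul (1 / 2)).congr_deriv (by ring)

theorem observer_energy_deriv_eq (α β k : ℝ) (p η r w : E) :
    ⟪p, r - α • p - η⟫_ℝ + ⟪η, -β • η - k • r - α • (r - α • p - η)⟫_ℝ
        + ⟪r, w - p + (k + α) • η - k • r⟫_ℝ =
      -α * ‖p‖ ^ 2 - (β - α) * ‖η‖ ^ 2 - k * ‖r‖ ^ 2 + (α ^ 2 - 1) * ⟪p, η⟫_ℝ + ⟪r, w⟫_ℝ := by
  simp only [inner_sub_right, inner_add_right, real_inner_smul_right, real_inner_self_eq_norm_sq]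
  rw [real_inner_comm p r, real_inner_comm η r, real_inner_comm η p]
  ring

theorem observer_energy_deriv_le {α β k c ρ ϖ : ℝ} (hk : 0 < k)
    (hρ : ∀ u v : ℝ, ρ * (u ^ 2 + v ^ 2) ≤ α * u ^ 2 - |1 - α ^ 2| * u * v + (β - α) * v ^ 2)
    (hϖρ : ϖ ≤ 2 * ρ) (hϖk : ϖ ≤ k) {p η r w : E} (hw : ‖w‖ ≤ c) :
    ⟪p, r - α • p - η⟫_ℝ + ⟪η, -β • η - k • r - α • (r - α • p - η)⟫_ℝ
        + ⟪r, w - p + (k + α) • η - k • r⟫_ℝ ≤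
      -ϖ * ((1 / 2) * (‖p‖ ^ 2 + ‖η‖ ^ 2 + ‖r‖ ^ 2)) + c ^ 2 / (2 * k) := by
  rw [observer_energy_deriv_eq]
  have hcross : (α ^ 2 - 1) * ⟪p, η⟫_ℝ ≤ |1 - α ^ 2| * ‖p‖ * ‖η‖ := by
    rw [mul_assoc, abs_sub_comm]
    exact (le_abs_self _).trans <| (abs_mul _ _).trans_le <|
      mul_le_mul_of_nonneg_left (abs_real_inner_le_norm p η) (abs_nonneg _)
  have hinput : ⟪r, w⟫_ℝ ≤ c * ‖r‖ :=
    (real_inner_le_norm r w).trans (by rw [mul_comm]; gcongr)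
  have hyoung : c * ‖r‖ ≤ (k / 2) * ‖r‖ ^ 2 + c ^ 2 / (2 * k) := by
    have : (k / 2) * ‖r‖ ^ 2 + c ^ 2 / (2 * k) - c * ‖r‖ = (k * ‖r‖ - c) ^ 2 / (2 * k) := by
      field_simp; ring
    nlinarith [div_nonneg (sq_nonneg (k * ‖r‖ - c)) (by positivity : (0 : ℝ) ≤ 2 * k)]
  have hpη := hρ ‖p‖ ‖η‖
  have hρϖ : 0 ≤ (ρ - ϖ / 2) * (‖p‖ ^ 2 + ‖η‖ ^ 2) := by
    apply mul_nonneg <;> [linarith; positivity]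
  have hkϖ : 0 ≤ (k - ϖ) / 2 * ‖r‖ ^ 2 := by
    apply mul_nonneg <;> [linarith; positivity]
  nlinarith

end Energy

theorem norm_le_sqrt_of_half_norm_sq_add_le {F : Type*} [SeminormedAddCommGroup F] {p η r : F}
    {M : ℝ} (h : (1 / 2) * (‖p‖ ^ 2 + ‖η‖ ^ 2 + ‖r‖ ^ 2) ≤ M) :
    ‖p‖ ≤ √(2 * M) ∧ ‖η‖ ≤ √(2 * M) ∧ ‖r‖ ≤ √(2 * M) := by
  have hp := sq_nonneg ‖p‖
  have hη := sq_nonneg ‖η‖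
  have hr := sq_nonneg ‖r‖
  refine ⟨?_, ?_, ?_⟩ <;> exact Real.le_sqrt_of_sq_le (by linarith)

theorem exists_bound_of_half_norm_sq_add_le {F : Type*} [SeminormedAddCommGroup F]
    [NormedSpace ℝ F] {ι : Type*} {s : Set ι} {p η r : ι → F} {M : ℝ} (α : ℝ)
    (h : ∀ i ∈ s, (1 / 2) * (‖p i‖ ^ 2 + ‖η i‖ ^ 2 + ‖r i‖ ^ 2) ≤ M) :
    ∃ C : ℝ, ∀ i ∈ s,
      ‖p i‖ ≤ C ∧ ‖r i - α • p i - η i‖ ≤ C ∧ ‖η i‖ ≤ C ∧ ‖r i‖ ≤ C := by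
  refine ⟨(2 + |α|) * √(2 * M), fun i hi => ?_⟩
  obtain ⟨hp, hη, hr⟩ := norm_le_sqrt_of_half_norm_sq_add_le (h i hi)
  have hsqrt : √(2 * M) ≤ (2 + |α|) * √(2 * M) :=
    le_mul_of_one_le_left (Real.sqrt_nonneg _) (by linarith [abs_nonneg α])
  have hq : ‖r i - α • p i - η i‖ ≤ ‖r i‖ + |α| * ‖p i‖ + ‖η i‖ := by
    grw [norm_sub_le, norm_sub_le, norm_smul, Real.norm_eq_abs]
  refine ⟨hp.trans hsqrt, hq.trans ?_, hη.trans hsqrt, hr.trans hsqrt⟩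
  grw [hp, hη, hr]
  linarith

theorem observer_errors_bounded_general {n N : ℕ} (t₀ : ℝ)
    (pt η r : ℝ → EuclideanSpace ℝ (Fin n))
    (Y : ℝ → Matrix (Fin n) (Fin N) ℝ) (θt : ℝ → EuclideanSpace ℝ (Fin N))
    (α β k c : ℝ)
    (hα : 0 < α) (hk : 0 < k) (hβ : (1 + α ^ 2) ^ 2 / (4 * α) < β)
    (qt : ℝ → EuclideanSpace ℝ (Fin n))
    (hqdef : ∀ t, qt t = r t - α • pt t - η t)
    (hp : ∀ t ∈ Ici t₀, HasDerivWithinAt pt (qt t) (Ici t₀) t)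
    (hη : ∀ t ∈ Ici t₀, HasDerivWithinAt η (-β • η t - k • r t - α • qt t) (Ici t₀) t)
    (hr : ∀ t ∈ Ici t₀, HasDerivWithinAt r
      (Matrix.toEuclideanLin (Y t) (θt t) - pt t + (k + α) • η t - k • r t) (Ici t₀) t)
    (hY : ∀ t ∈ Ici t₀, ‖Matrix.toEuclideanLin (Y t) (θt t)‖ ≤ c)
    (Qr : Matrix (Fin 2) (Fin 2) ℝ)
    (hQr : Qr = !![α, -|1 - α ^ 2| / 2; -|1 - α ^ 2| / 2, β - α])
    (lmin : ℝ)
    (hlmin : lmin = sInf ((fun x : EuclideanSpace ℝ (Fin 2) =>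
      (inner ℝ x (Matrix.toEuclideanLin Qr x) : ℝ)) '' {x | ‖x‖ = 1}))
    (ϖr : ℝ) (hϖr : ϖr = min (2 * lmin) k) :
    (∀ t ∈ Ici t₀,
      (1 / 2) * (‖pt t‖ ^ 2 + ‖η t‖ ^ 2 + ‖r t‖ ^ 2) ≤
        max ((1 / 2) * (‖pt t₀‖ ^ 2 + ‖η t₀‖ ^ 2 + ‖r t₀‖ ^ 2)) (c ^ 2 / (2 * k * ϖr)))
    ∧ ∃ C : ℝ, ∀ t ∈ Ici t₀,
        ‖pt t‖ ≤ C ∧ ‖qt t‖ ≤ C ∧ ‖η t‖ ≤ C ∧ ‖r t‖ ≤ C := by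
  subst hQr hlmin hϖr
  have hβ' : (1 + α ^ 2) ^ 2 < β * (4 * α) := (div_lt_iff₀ (by positivity)).mp hβ
  have hβα : 0 < β - α := by nlinarith [sq_nonneg (1 - α ^ 2)]
  have hdet : (-|1 - α ^ 2| / 2) ^ 2 < α * (β - α) := by
    rw [div_pow, neg_sq, sq_abs]
    nlinarith
  have hρ_pos := minRayleigh_fin_two_pos hα hβα hdet
  have hϖ : 0 < min (2 * minRayleigh _) k := lt_min (by linarith) hk
  have hρ (u v : ℝ) := (minRayleigh_fin_two_mul_le α (-|1 - α ^ 2| / 2) (β - α) u v).trans_eq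
    (by ring : _ = α * u ^ 2 - |1 - α ^ 2| * u * v + (β - α) * v ^ 2)
  have hVle := le_max_of_hasDerivWithinAt_le hϖ
    (fun t ht => (hp t ht).half_norm_sq_add_add (hη t ht) (hr t ht))
    (fun t ht => by
      rw [hqdef t]
      exact observer_energy_deriv_le hk hρ (min_le_left _ _) (min_le_right _ _) (hY t ht))
  refine ⟨fun t ht => by rw [← div_div]; exact hVle t ht, ?_⟩
  obtain ⟨C, hC⟩ := exists_bound_of_half_norm_sq_add_le α hVle
  exact ⟨C, fun t ht => hqdef t ▸ hC t ht⟩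

/-- Lemma 2: for the observer error dynamics `p̃' = q̃`, `η' = −βη − kr − αq̃`,
`r' = Yθ̃ − p̃ + (k+α)η − kr` on `[t₀, ∞)`, with `q̃ = r − αp̃ − η`, gains `α > 0`, `k > 0`,
`β > (1+α²)²/(4α)`, and `‖Y(t)θ̃(t)‖ ≤ c`, setting
`Q_r = [[α, −|1−α²|/2], [−|1−α²|/2, β−α]]`, `λ_min(Q_r)` its minimum eigenvalue (as the
infimum of the Rayleigh quotient over the unit sphere), `ϖ_r = min{2λ_min(Q_r), k}` and
`V_r = (1/2)(‖p̃‖² + ‖η‖² + ‖r‖²)`, one has `V_r(t) ≤ max{V_r(t₀), c²/(2kϖ_r)}` for all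
`t ≥ t₀`; in particular `p̃, q̃, η, r` are bounded on `[t₀, ∞)`. -/
theorem observer_errors_bounded {n N : ℕ} (t₀ : ℝ)
    (pt η r : ℝ → EuclideanSpace ℝ (Fin n))
    (Y : ℝ → Matrix (Fin n) (Fin N) ℝ) (θt : ℝ → EuclideanSpace ℝ (Fin N))
    (α β k c : ℝ)
    (hα : 0 < α) (hk : 0 < k) (hβ : (1 + α ^ 2) ^ 2 / (4 * α) < β) (hc : 0 ≤ c)
    (qt : ℝ → EuclideanSpace ℝ (Fin n))
    (hqdef : ∀ t, qt t = r t - α • pt t - η t)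
    (hp : ∀ t ∈ Ici t₀, HasDerivWithinAt pt (qt t) (Ici t₀) t)
    (hη : ∀ t ∈ Ici t₀, HasDerivWithinAt η (-β • η t - k • r t - α • qt t) (Ici t₀) t)
    (hr : ∀ t ∈ Ici t₀, HasDerivWithinAt r
      (Matrix.toEuclideanLin (Y t) (θt t) - pt t + (k + α) • η t - k • r t) (Ici t₀) t)
    (hY : ∀ t ∈ Ici t₀, ‖Matrix.toEuclideanLin (Y t) (θt t)‖ ≤ c)
    (Qr : Matrix (Fin 2) (Fin 2) ℝ)
    (hQr : Qr = !![α, -|1 - α ^ 2| / 2; -|1 - α ^ 2| / 2, β - α])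
    (lmin : ℝ)
    (hlmin : lmin = sInf ((fun x : EuclideanSpace ℝ (Fin 2) =>
      (inner ℝ x (Matrix.toEuclideanLin Qr x) : ℝ)) '' {x | ‖x‖ = 1}))
    (ϖr : ℝ) (hϖr : ϖr = min (2 * lmin) k) :
    (∀ t ∈ Ici t₀,
      (1 / 2) * (‖pt t‖ ^ 2 + ‖η t‖ ^ 2 + ‖r t‖ ^ 2) ≤
        max ((1 / 2) * (‖pt t₀‖ ^ 2 + ‖η t₀‖ ^ 2 + ‖r t₀‖ ^ 2)) (c ^ 2 / (2 * k * ϖr)))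
    ∧ ∃ C : ℝ, ∀ t ∈ Ici t₀,
        ‖pt t‖ ≤ C ∧ ‖qt t‖ ≤ C ∧ ‖η t‖ ≤ C ∧ ‖r t‖ ≤ C :=
  observer_errors_bounded_general t₀ pt η r Y θt α β k c hα hk hβ qt hqdef hp hη hr hY Qr hQr lmin
    hlmin ϖr hϖr
end

section
/- (Theorem 1, exponential convergence phase.) Suppose p̃, η, r : [t_M, ∞) → ℝⁿ and θ̃ : [t_M, ∞) → ℝᴺ are differentiable and satisfy p̃'(t) = q̃(t), η'(t) = −β η(t) − k r(t) − α q̃(t), r'(t) = Y(t) θ̃(t) − p̃(t) + (k+α) η(t) − k r(t), and θ̃'(t) = −k_θ Γ(t) 𝒢(t) θ̃(t), where q̃(t) := r(t) − α p̃(t) − η(t); here Γ : [t_M, ∞) → ℝ^{N×N} is differentiable, symmetric, satisfies Γ̇ = β₁Γ − k_θ Γ 𝒢 Γ with β₁ ≥ 0 and γ̲ I ⪯ Γ(t) ⪯ γ̄ I for constants 0 < γ̲ ≤ γ̄; the matrices 𝒢(t) are symmetric and satisfy θ̃ᵀ𝒢(t)θ̃ ≥ c̲‖θ̃‖² for all θ̃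 ∈ ℝᴺ and all t ≥ t_M, with c̲ > 0; ‖Y(t)‖ ≤ Ȳ (operator norm) for all t; and the gains satisfy α > 0, k > 0, k_θ > 0, β > (1 + α²)²/(4α), and k·k_θ·c̲ > Ȳ²/2. Let V(t) := (1/2)(‖p̃(t)‖² + ‖η(t)‖² + ‖r(t)‖²) + (1/2) θ̃(t)ᵀ Γ(t)⁻¹ θ̃(t). Then there exists a constant ϖ > 0 such that V(t) ≤ V(t_M) e^{−ϖ (t − t_M)} for all t ≥ t_M; consequently ‖p̃(t)‖, ‖q̃(t)‖, and ‖θ̃(t)‖ all converge exponentially to zero as t → ∞. -/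
/-!
Along solutions the Lyapunov function `V` satisfies
`V̇ = -α‖p̃‖² - (β - α)‖η‖² - k‖r‖² + (α² - 1)⟪p̃, η⟫ + ⟪r, Yθ̃⟫ - (β₁/2) θ̃ᵀΓ⁻¹θ̃ - (k_θ/2) θ̃ᵀ𝒢θ̃`,
the last two terms because `d/dt Γ⁻¹ = -Γ⁻¹ Γ̇ Γ⁻¹ = -β₁Γ⁻¹ + k_θ𝒢`. The gain conditions say
exactly that Young's inequality absorbs the two cross terms with room to spare, so that
`V̇ ≤ -ε(‖p̃‖² + ‖η‖² + ‖r‖² + ‖θ̃‖²) ≤ -ϖV` by `γ̲I ⪯ Γ`. Grönwall's inequality then gives the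
decay of `V`, and `Γ ⪯ γ̄I` turns it into exponential decay of `‖p̃‖`, `‖θ̃‖` and
`‖q̃‖ ≤ ‖r‖ + α‖p̃‖ + ‖η‖`.
-/

open Set
attribute [local instance] Matrix.normedAddCommGroup Matrix.normedSpace

open scoped RealInnerProductSpace

theorem map_ringInverse {F M₀ N₀ : Type*} [MonoidWithZero M₀] [MonoidWithZero N₀]
    [EquivLike F M₀ N₀] [MulEquivClass F M₀ N₀] (e : F) (a : M₀) :
    e (Ring.inverse a) = Ring.inverse (e a) := by
  by_cases ha : IsUnit a
  · obtain ⟨u, rfl⟩ := ha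
    rw [Ring.inverse_unit]
    exact (Ring.inverse_unit (Units.map (e : M₀ →* N₀) u)).symm
  · rw [Ring.inverse_non_unit a ha, Ring.inverse_non_unit _ ((MulEquiv.isUnit_map e).not.mpr ha),
      map_zero]

theorem exists_pos_mul_mul_le_of_sq_lt {a b c : ℝ} (ha : 0 < a) (hb : 0 < b)
    (hc : c ^ 2 < 4 * a * b) :
    ∃ ε > 0, ∀ x y : ℝ, c * x * y ≤ (a - ε) * x ^ 2 + (b - ε) * y ^ 2 := by
  set ε := (4 * a * b - c ^ 2) / (8 * (a + b))
  have hε : 0 < ε := div_pos (by linarith) (by positivity)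
  have hεab : ε * (8 * (a + b)) = 4 * a * b - c ^ 2 := div_mul_cancel₀ _ (by positivity)
  have ha' : 0 < a - ε := by nlinarith [sq_nonneg c]
  have hdisc : c ^ 2 ≤ 4 * (a - ε) * (b - ε) := by nlinarith [sq_nonneg ε]
  refine ⟨ε, hε, fun x y => ?_⟩
  -- `4(a-ε)((a-ε)x² + (b-ε)y² - cxy) = (2(a-ε)x - cy)² + (4(a-ε)(b-ε) - c²)y²`
  nlinarith [sq_nonneg (2 * (a - ε) * x - c * y), mul_nonneg (sub_nonneg.2 hdisc) (sq_nonneg y)]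

theorem le_mul_exp_of_hasDerivWithinAt_le {f : ℝ → ℝ} {a ϖ : ℝ}
    (hf : ∀ t ∈ Ici a, ∃ d, HasDerivWithinAt f d (Ici a) t ∧ d ≤ -ϖ * f t) :
    ∀ t ∈ Ici a, f t ≤ f a * Real.exp (-ϖ * (t - a)) := by
  choose! f' hf' hbound using hf
  intro t ht
  have hcont : ContinuousOn f (Icc a t) := fun x hx =>
    ((hf' x hx.1).continuousWithinAt).mono Icc_subset_Ici_self
  have hslope : ∀ x ∈ Ico a t, ∀ r, f' x < r →
      ∃ᶠ z in nhdsWithin x (Ioi x), (z - x)⁻¹ * (f z - f x) < r := fun x hx _ hr =>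
    ((hf' x hx.1).mono (Ici_subset_Ici.2 hx.1)).liminf_right_slope_le hr
  have := le_gronwallBound_of_liminf_deriv_right_le hcont hslope le_rfl
    (fun x hx => (hbound x hx.1).trans_eq (add_zero _).symm) t ⟨ht, le_rfl⟩
  rwa [gronwallBound_ε0] at this

theorem le_sqrt_mul_exp_of_sq_le {x M ϖ Δ : ℝ} (hx : 0 ≤ x)
    (h : x ^ 2 ≤ M * Real.exp (-ϖ * Δ)) : x ≤ Real.sqrt M * Real.exp (-(ϖ / 2) * Δ) := by
  have hexp : Real.exp (-(ϖ / 2) * Δ) = Real.sqrt (Real.exp (-ϖ * Δ)) := by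
    rw [← Real.exp_half]; ring_nf
  rw [hexp, ← Real.sqrt_mul' _ (Real.exp_pos _).le, ← Real.sqrt_sq hx]
  exact Real.sqrt_le_sqrt h

section Coercive

variable {E : Type*} [NormedAddCommGroup E] [InnerProductSpace ℝ E] {T : E →ₗ[ℝ] E} {v w : E}

theorem real_inner_nonneg_of_coercive {γ : ℝ} (hγ : 0 ≤ γ) (hT : ∀ x, γ * ‖x‖ ^ 2 ≤ ⟪x, T x⟫)
    (hw : T w = v) : 0 ≤ ⟪v, w⟫ := by
  have := hT w
  rw [hw, real_inner_comm] at this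
  exact (by positivity : 0 ≤ γ * ‖w‖ ^ 2).trans this

theorem real_inner_le_norm_sq_div_of_coercive {γ : ℝ} (hγ : 0 < γ)
    (hT : ∀ x, γ * ‖x‖ ^ 2 ≤ ⟪x, T x⟫) (hw : T w = v) : ⟪v, w⟫ ≤ ‖v‖ ^ 2 / γ := by
  have hlo := hT w
  rw [hw, real_inner_comm] at hlo
  have hcs := real_inner_le_norm v w
  rw [le_div_iff₀ hγ]
  nlinarith [sq_nonneg (‖v‖ - γ * ‖w‖), norm_nonneg w]

theorem norm_sq_div_le_real_inner_of_isPositive {c : ℝ} (hT : T.IsPositive) (hc : 0 < c)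
    (hTc : ∀ x, ⟪x, T x⟫ ≤ c * ‖x‖ ^ 2) (hw : T w = v) : ‖v‖ ^ 2 / c ≤ ⟪v, w⟫ := by
  -- positivity of `T` at `c • w - v`, with `T w = v` and `⟪w, T v⟫ = ⟪T w, v⟫ = ‖v‖²`
  have hpos := hT.inner_nonneg_right (c • w - v)
  have hsymm : ⟪w, T v⟫ = ‖v‖ ^ 2 := by
    rw [← hT.isSymmetric, hw, real_inner_self_eq_norm_sq]
  simp only [map_sub, map_smul, hw, inner_sub_left, inner_sub_right, real_inner_smul_left,
    real_inner_smul_right, hsymm, real_inner_self_eq_norm_sq, real_inner_comm v w] at hpos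
  rw [div_le_iff₀ hc]
  nlinarith [hTc v]

end Coercive

theorem Matrix.PosSemidef.posDef_of_sub_smul_one {ι : Type*} [DecidableEq ι] {A : Matrix ι ι ℝ}
    {c : ℝ} (h : (A - c • 1).PosSemidef) (hc : 0 < c) : A.PosDef := by
  simpa using Matrix.PosDef.posSemidef_add h (Matrix.PosDef.one.smul hc)

section MatrixQuadraticForm

variable {ι : Type*} [Fintype ι] [DecidableEq ι] {A : Matrix ι ι ℝ} {c : ℝ}

theorem Matrix.PosSemidef.mul_norm_sq_le_inner (h : (A - c • 1).PosSemidef)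
    (v : EuclideanSpace ℝ ι) : c * ‖v‖ ^ 2 ≤ ⟪v, Matrix.toEuclideanLin A v⟫ := by
  have := (Matrix.isPositive_toEuclideanLin_iff.mpr h).inner_nonneg_right v
  simpa [inner_sub_right, real_inner_smul_right, real_inner_self_eq_norm_sq] using this

theorem Matrix.PosSemidef.inner_le_mul_norm_sq (h : (c • 1 - A).PosSemidef)
    (v : EuclideanSpace ℝ ι) : ⟪v, Matrix.toEuclideanLin A v⟫ ≤ c * ‖v‖ ^ 2 := by
  have := (Matrix.isPositive_toEuclideanLin_iff.mpr h).inner_nonneg_right v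
  simpa [inner_sub_right, real_inner_smul_right, real_inner_self_eq_norm_sq] using this

theorem Matrix.toEuclideanLin_apply_toEuclideanLin_inv (hA : IsUnit A) (v : EuclideanSpace ℝ ι) :
    Matrix.toEuclideanLin A (Matrix.toEuclideanLin A⁻¹ v) = v := by
  change Matrix.toEuclideanCLM (𝕜 := ℝ) A (Matrix.toEuclideanCLM (𝕜 := ℝ) A⁻¹ v) = v
  rw [← mul_apply_eq_comp, ← map_mul,
    Matrix.mul_nonsing_inv _ ((Matrix.isUnit_iff_isUnit_det A).1 hA), map_one, one_apply_eq_self]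

theorem Matrix.toEuclideanLin_inv_apply_toEuclideanLin (hA : IsUnit A) (v : EuclideanSpace ℝ ι) :
    Matrix.toEuclideanLin A⁻¹ (Matrix.toEuclideanLin A v) = v := by
  change Matrix.toEuclideanCLM (𝕜 := ℝ) A⁻¹ (Matrix.toEuclideanCLM (𝕜 := ℝ) A v) = v
  rw [← mul_apply_eq_comp, ← map_mul,
    Matrix.nonsing_inv_mul _ ((Matrix.isUnit_iff_isUnit_det A).1 hA), map_one, one_apply_eq_self]

theorem Matrix.PosSemidef.inner_toEuclideanLin_inv_nonneg (h : (A - c • 1).PosSemidef) (hc : 0 < c)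
    (v : EuclideanSpace ℝ ι) : 0 ≤ ⟪v, Matrix.toEuclideanLin A⁻¹ v⟫ :=
  real_inner_nonneg_of_coercive hc.le h.mul_norm_sq_le_inner
    (Matrix.toEuclideanLin_apply_toEuclideanLin_inv (h.posDef_of_sub_smul_one hc).isUnit v)

theorem Matrix.PosSemidef.inner_toEuclideanLin_inv_le (h : (A - c • 1).PosSemidef) (hc : 0 < c)
    (v : EuclideanSpace ℝ ι) : ⟪v, Matrix.toEuclideanLin A⁻¹ v⟫ ≤ ‖v‖ ^ 2 / c :=
  real_inner_le_norm_sq_div_of_coercive hc h.mul_norm_sq_le_inner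
    (Matrix.toEuclideanLin_apply_toEuclideanLin_inv (h.posDef_of_sub_smul_one hc).isUnit v)

theorem Matrix.PosSemidef.norm_sq_div_le_inner_toEuclideanLin_inv {γ : ℝ}
    (hlo : (A - γ • 1).PosSemidef) (hγ : 0 < γ) (hhi : (c • 1 - A).PosSemidef) (hc : 0 < c)
    (v : EuclideanSpace ℝ ι) : ‖v‖ ^ 2 / c ≤ ⟪v, Matrix.toEuclideanLin A⁻¹ v⟫ :=
  have hA := hlo.posDef_of_sub_smul_one hγ
  norm_sq_div_le_real_inner_of_isPositive (Matrix.isPositive_toEuclideanLin_iff.mpr hA.posSemidef)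
    hc hhi.inner_le_mul_norm_sq (Matrix.toEuclideanLin_apply_toEuclideanLin_inv hA.isUnit v)

end MatrixQuadraticForm

section Derivatives

variable {s : Set ℝ} {t : ℝ}

theorem hasDerivWithinAt_filter_energy {E : Type*} [NormedAddCommGroup E] [InnerProductSpace ℝ E]
    {p η r : ℝ → E} {q u : E} {α β k : ℝ} (hq : q = r t - α • p t - η t)
    (hp : HasDerivWithinAt p q s t) (hη : HasDerivWithinAt η (-β • η t - k • r t - α • q) s t)
    (hr : HasDerivWithinAt r (u - p t + (k + α) • η t - k • r t) s t) :
    HasDerivWithinAt (fun τ => (1 / 2) * (‖p τ‖ ^ 2 + ‖η τ‖ ^ 2 + ‖r τ‖ ^ 2))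
      (-α * ‖p t‖ ^ 2 - (β - α) * ‖η t‖ ^ 2 - k * ‖r t‖ ^ 2 + (α ^ 2 - 1) * ⟪p t, η t⟫
        + ⟪r t, u⟫) s t := by
  refine (((hp.norm_sq.add hη.norm_sq).add hr.norm_sq).const_mul (1 / 2)).congr_deriv ?_
  subst hq
  simp only [inner_sub_right, inner_add_right, real_inner_smul_right, real_inner_self_eq_norm_sq,
    real_inner_comm (p t) (r t), real_inner_comm (p t) (η t), real_inner_comm (η t) (r t)]
  ring

variable {ι : Type*} [Fintype ι] [DecidableEq ι] {Γ : ℝ → Matrix ι ι ℝ} {Γ' : Matrix ι ι ℝ}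

theorem HasDerivWithinAt.matrix_toEuclideanCLM (hΓ : HasDerivWithinAt Γ Γ' s t) :
    HasDerivWithinAt (fun τ => Matrix.toEuclideanCLM (𝕜 := ℝ) (Γ τ))
      (Matrix.toEuclideanCLM (𝕜 := ℝ) Γ') s t :=
  (LinearMap.toContinuousLinearMap (Matrix.toEuclideanCLM (n := ι) (𝕜 := ℝ)).toAlgEquiv.toLinearMap
    ).hasFDerivAt.comp_hasDerivWithinAt t hΓ

theorem HasDerivWithinAt.matrix_toEuclideanCLM_inv (hΓ : HasDerivWithinAt Γ Γ' s t)
    (hu : IsUnit (Γ t)) :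
    HasDerivWithinAt (fun τ => Matrix.toEuclideanCLM (𝕜 := ℝ) (Γ τ)⁻¹)
      (-Matrix.toEuclideanCLM (𝕜 := ℝ) ((Γ t)⁻¹ * Γ' * (Γ t)⁻¹)) s t := by
  have hinv := (hasFDerivAt_ringInverse (hu.map (Matrix.toEuclideanCLM (n := ι) (𝕜 := ℝ))).unit
    ).comp_hasDerivWithinAt t hΓ.matrix_toEuclideanCLM
  simp only [Matrix.nonsing_inv_eq_ringInverse, map_ringInverse]
  refine hinv.congr_deriv ?_
  rw [neg_apply, ContinuousLinearMap.mulLeftRight_apply, map_mul, map_mul, map_ringInverse,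
    Ring.inverse_of_isUnit (hu.map _)]

theorem hasDerivWithinAt_inner_toEuclideanLin_inv {θ : ℝ → EuclideanSpace ℝ ι}
    {𝒢 : Matrix ι ι ℝ} {β₁ kθ : ℝ}
    (hθ : HasDerivWithinAt θ
      (-(kθ • Matrix.toEuclideanLin (Γ t) (Matrix.toEuclideanLin 𝒢 (θ t)))) s t)
    (hΓ : HasDerivWithinAt Γ (β₁ • Γ t - kθ • (Γ t * 𝒢 * Γ t)) s t)
    (hsymm : (Γ t).IsHermitian) (hu : IsUnit (Γ t)) :
    HasDerivWithinAt (fun τ => ⟪θ τ, Matrix.toEuclideanLin (Γ τ)⁻¹ (θ τ)⟫)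
      (-β₁ * ⟪θ t, Matrix.toEuclideanLin (Γ t)⁻¹ (θ t)⟫
        - kθ * ⟪θ t, Matrix.toEuclideanLin 𝒢 (θ t)⟫) s t := by
  have hdet : IsUnit (Γ t).det := (Matrix.isUnit_iff_isUnit_det _).1 hu
  have hsandwich : (Γ t)⁻¹ * (β₁ • Γ t - kθ • (Γ t * 𝒢 * Γ t)) * (Γ t)⁻¹
      = β₁ • (Γ t)⁻¹ - kθ • 𝒢 := by
    simp only [Matrix.mul_sub, Matrix.sub_mul, Matrix.mul_smul, Matrix.smul_mul,
      Matrix.nonsing_inv_mul _ hdet, one_mul, Matrix.mul_assoc,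
      Matrix.nonsing_inv_mul_cancel_left (h := hdet), Matrix.mul_nonsing_inv _ hdet, mul_one]
  have hsymm' := Matrix.isSymmetric_toEuclideanLin_iff.mpr hsymm.inv
  refine (hθ.inner ℝ ((hΓ.matrix_toEuclideanCLM_inv hu).clm_apply hθ)).congr_deriv ?_
  simp only [← map_neg]
  change ⟪θ t, Matrix.toEuclideanLin _ (θ t) + Matrix.toEuclideanLin _ _⟫
    + ⟪_, Matrix.toEuclideanLin _ (θ t)⟫ = _
  rw [← hsymm', map_neg, map_neg, map_smul, Matrix.toEuclideanLin_inv_apply_toEuclideanLin hu,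
    hsandwich, real_inner_comm (θ t)]
  simp only [map_sub, map_smul, LinearMap.neg_apply, LinearMap.sub_apply, LinearMap.smul_apply,
    inner_add_right, inner_neg_right, inner_sub_right, real_inner_smul_right]
  ring

end Derivatives

section Lyapunov

variable {E : Type*} [NormedAddCommGroup E] [InnerProductSpace ℝ E]
  {ι : Type*} [Fintype ι] [DecidableEq ι]

noncomputable def lyapunov (p η r : ℝ → E) (θ : ℝ → EuclideanSpace ℝ ι) (Γ : ℝ → Matrix ι ι ℝ)
    (t : ℝ) : ℝ :=
  (1 / 2) * (‖p t‖ ^ 2 + ‖η t‖ ^ 2 + ‖r t‖ ^ 2)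
    + (1 / 2) * ⟪θ t, Matrix.toEuclideanLin (Γ t)⁻¹ (θ t)⟫

theorem exists_pos_lyapunov_derivative_le {F : Type*} [NormedAddCommGroup F]
    [InnerProductSpace ℝ F] {α β k kθ clo Ybar : ℝ} (hα : 0 < α) (hk : 0 < k) (hkθ : 0 < kθ)
    (hclo : 0 < clo) (hβ : (1 + α ^ 2) ^ 2 / (4 * α) < β) (hgain : Ybar ^ 2 / 2 < k * kθ * clo) :
    ∃ ε > 0, ∀ (p η r u : E) (θ : F) (g : ℝ), ‖u‖ ≤ Ybar * ‖θ‖ → clo * ‖θ‖ ^ 2 ≤ g →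
      -α * ‖p‖ ^ 2 - (β - α) * ‖η‖ ^ 2 - k * ‖r‖ ^ 2 + (α ^ 2 - 1) * ⟪p, η⟫ + ⟪r, u⟫
        - kθ / 2 * g ≤ -ε * (‖p‖ ^ 2 + ‖η‖ ^ 2 + ‖r‖ ^ 2 + ‖θ‖ ^ 2) := by
  rw [div_lt_iff₀ (by positivity)] at hβ
  -- `hβ` reads `(α² - 1)² < 4α(β - α)`, as `(1 + α²)² = (α² - 1)² + 4α²`
  obtain ⟨ε₁, hε₁, hpη⟩ := exists_pos_mul_mul_le_of_sq_lt (a := α) (b := β - α)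
    (c := |α ^ 2 - 1|) hα (by nlinarith [sq_nonneg (α ^ 2 - 1)]) (by rw [sq_abs]; nlinarith)
  obtain ⟨ε₂, hε₂, hrθ⟩ := exists_pos_mul_mul_le_of_sq_lt (a := k) (b := kθ * clo / 2) (c := Ybar)
    hk (by positivity) (by nlinarith)
  refine ⟨min ε₁ ε₂, lt_min hε₁ hε₂, fun p η r u θ g hu hg => ?_⟩
  have h₁ : (α ^ 2 - 1) * ⟪p, η⟫ ≤ |α ^ 2 - 1| * ‖p‖ * ‖η‖ := by
    rw [mul_assoc]
    exact (le_abs_self _).trans ((abs_mul _ _).trans_le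
      (mul_le_mul_of_nonneg_left (abs_real_inner_le_norm p η) (abs_nonneg _)))
  have h₂ : ⟪r, u⟫ ≤ Ybar * ‖r‖ * ‖θ‖ := by
    rw [mul_comm Ybar, mul_assoc]
    exact (real_inner_le_norm r u).trans (mul_le_mul_of_nonneg_left hu (norm_nonneg r))
  have h₃ := hpη ‖p‖ ‖η‖
  have h₄ := hrθ ‖r‖ ‖θ‖
  have h₅ := mul_le_mul_of_nonneg_left hg (by positivity : 0 ≤ kθ / 2)
  have hmin₁ := min_le_left ε₁ ε₂
  have hmin₂ := min_le_right ε₁ ε₂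
  linarith [mul_le_mul_of_nonneg_right hmin₁ (sq_nonneg ‖p‖),
    mul_le_mul_of_nonneg_right hmin₁ (sq_nonneg ‖η‖),
    mul_le_mul_of_nonneg_right hmin₂ (sq_nonneg ‖r‖),
    mul_le_mul_of_nonneg_right hmin₂ (sq_nonneg ‖θ‖)]

theorem exists_hasDerivWithinAt_lyapunov_le {s : Set ℝ} {t : ℝ} {p η r : ℝ → E}
    {θ : ℝ → EuclideanSpace ℝ ι} {Γ : ℝ → Matrix ι ι ℝ} {𝒢 : Matrix ι ι ℝ} {q u : E}
    {α β k kθ β₁ γlo ε : ℝ} (hq : q = r t - α • p t - η t)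
    (hp : HasDerivWithinAt p q s t) (hη : HasDerivWithinAt η (-β • η t - k • r t - α • q) s t)
    (hr : HasDerivWithinAt r (u - p t + (k + α) • η t - k • r t) s t)
    (hθ : HasDerivWithinAt θ
      (-(kθ • Matrix.toEuclideanLin (Γ t) (Matrix.toEuclideanLin 𝒢 (θ t)))) s t)
    (hΓ : HasDerivWithinAt Γ (β₁ • Γ t - kθ • (Γ t * 𝒢 * Γ t)) s t)
    (hΓlo : (Γ t - γlo • 1).PosSemidef) (hγlo : 0 < γlo) (hβ₁ : 0 ≤ β₁) (hε : 0 ≤ ε)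
    (hneg : -α * ‖p t‖ ^ 2 - (β - α) * ‖η t‖ ^ 2 - k * ‖r t‖ ^ 2 + (α ^ 2 - 1) * ⟪p t, η t⟫
        + ⟪r t, u⟫ - kθ / 2 * ⟪θ t, Matrix.toEuclideanLin 𝒢 (θ t)⟫
      ≤ -ε * (‖p t‖ ^ 2 + ‖η t‖ ^ 2 + ‖r t‖ ^ 2 + ‖θ t‖ ^ 2)) :
    ∃ d, HasDerivWithinAt (lyapunov p η r θ Γ) d s t ∧
      d ≤ -(2 * ε * min 1 γlo) * lyapunov p η r θ Γ t := by
  have hΓpd := hΓlo.posDef_of_sub_smul_one hγlo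
  refine ⟨_, (hasDerivWithinAt_filter_energy hq hp hη hr).add
    ((hasDerivWithinAt_inner_toEuclideanLin_inv hθ hΓ hΓpd.isHermitian hΓpd.isUnit).const_mul
      (1 / 2)), ?_⟩
  have hW₀ := hΓlo.inner_toEuclideanLin_inv_nonneg hγlo (θ t)
  have hW := (le_div_iff₀ hγlo).1 (hΓlo.inner_toEuclideanLin_inv_le hγlo (θ t))
  have hV : 2 * min 1 γlo * lyapunov p η r θ Γ t
      ≤ ‖p t‖ ^ 2 + ‖η t‖ ^ 2 + ‖r t‖ ^ 2 + ‖θ t‖ ^ 2 := by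
    have h₁ := min_le_left 1 γlo
    have h₂ := min_le_right 1 γlo
    have h₃ : 0 < min 1 γlo := lt_min one_pos hγlo
    unfold lyapunov
    nlinarith [sq_nonneg ‖p t‖, sq_nonneg ‖η t‖, sq_nonneg ‖r t‖]
  nlinarith [mul_le_mul_of_nonneg_left hV hε, mul_nonneg hβ₁ hW₀]

theorem exists_norm_le_mul_exp_of_lyapunov_le {p η r : ℝ → E} {θ : ℝ → EuclideanSpace ℝ ι}
    {Γ : ℝ → Matrix ι ι ℝ} {a ϖ α γhi : ℝ} (hϖ : 0 < ϖ) (hα : 0 < α) (hγhi : 0 < γhi)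
    (hθ : ∀ t ∈ Ici a, ‖θ t‖ ^ 2 / γhi ≤ ⟪θ t, Matrix.toEuclideanLin (Γ t)⁻¹ (θ t)⟫)
    (hV : ∀ t ∈ Ici a,
      lyapunov p η r θ Γ t ≤ lyapunov p η r θ Γ a * Real.exp (-ϖ * (t - a))) :
    ∃ C κ : ℝ, 0 < κ ∧ ∀ t ∈ Ici a,
      ‖p t‖ ≤ C * Real.exp (-κ * (t - a)) ∧
      ‖r t - α • p t - η t‖ ≤ C * Real.exp (-κ * (t - a)) ∧
      ‖θ t‖ ≤ C * Real.exp (-κ * (t - a)) := by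
  set K := 2 * max 1 γhi * lyapunov p η r θ Γ a
  set B := fun t => Real.sqrt K * Real.exp (-(ϖ / 2) * (t - a))
  have hnorm : ∀ t ∈ Ici a, ∀ x : ℝ, 0 ≤ x →
      x ^ 2 ≤ 2 * max 1 γhi * lyapunov p η r θ Γ t → x ≤ B t := by
    intro t ht x hx hxV
    refine le_sqrt_mul_exp_of_sq_le hx (hxV.trans ?_)
    calc 2 * max 1 γhi * lyapunov p η r θ Γ t
        ≤ 2 * max 1 γhi * (lyapunov p η r θ Γ a * Real.exp (-ϖ * (t - a))) :=
          mul_le_mul_of_nonneg_left (hV t ht) (by positivity)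
      _ = K * Real.exp (-ϖ * (t - a)) := by ring
  refine ⟨(2 + α) * Real.sqrt K, ϖ / 2, half_pos hϖ, fun t ht => ?_⟩
  have hW := (div_le_iff₀ hγhi).1 (hθ t ht)
  have hW₀ : 0 ≤ ⟪θ t, Matrix.toEuclideanLin (Γ t)⁻¹ (θ t)⟫ :=
    (div_nonneg (sq_nonneg _) hγhi.le).trans (hθ t ht)
  have h₁ := le_max_left 1 γhi
  have h₂ := le_max_right 1 γhi
  obtain ⟨hpB, hηB, hrB, hθB⟩ : ‖p t‖ ≤ B t ∧ ‖η t‖ ≤ B t ∧ ‖r t‖ ≤ B t ∧ ‖θ t‖ ≤ B t := by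
    refine ⟨?_, ?_, ?_, ?_⟩ <;> refine hnorm t ht _ (norm_nonneg _) ?_ <;> unfold lyapunov <;>
      nlinarith [sq_nonneg ‖p t‖, sq_nonneg ‖η t‖, sq_nonneg ‖r t‖]
  have hq : ‖r t - α • p t - η t‖ ≤ ‖r t‖ + α * ‖p t‖ + ‖η t‖ := by
    refine (norm_sub_le _ _).trans (add_le_add_left ((norm_sub_le _ _).trans_eq ?_) _)
    rw [norm_smul, Real.norm_of_nonneg hα.le]
  rw [mul_assoc]
  have hB : 0 ≤ B t := by positivity
  refine ⟨?_, ?_, ?_⟩ <;> nlinarith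

end Lyapunov

theorem exponential_convergence_general {n N : ℕ} (tM : ℝ)
    (pt η r : ℝ → EuclideanSpace ℝ (Fin n))
    (θt : ℝ → EuclideanSpace ℝ (Fin N))
    (Y : ℝ → Matrix (Fin n) (Fin N) ℝ)
    (Γ 𝒢 : ℝ → Matrix (Fin N) (Fin N) ℝ)
    (α β k kθ β₁ γlo γhi clo Ybar : ℝ)
    (hα : 0 < α) (hk : 0 < k) (hkθ : 0 < kθ) (hβ₁ : 0 ≤ β₁)
    (hγlo : 0 < γlo) (hγ : γlo ≤ γhi) (hclo : 0 < clo)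
    (hβ : (1 + α ^ 2) ^ 2 / (4 * α) < β)
    (hgain : Ybar ^ 2 / 2 < k * kθ * clo)
    (qt : ℝ → EuclideanSpace ℝ (Fin n))
    (hqdef : ∀ t, qt t = r t - α • pt t - η t)
    (hp : ∀ t ∈ Ici tM, HasDerivWithinAt pt (qt t) (Ici tM) t)
    (hη : ∀ t ∈ Ici tM, HasDerivWithinAt η (-β • η t - k • r t - α • qt t) (Ici tM) t)
    (hr : ∀ t ∈ Ici tM, HasDerivWithinAt r
      (Matrix.toEuclideanLin (Y t) (θt t) - pt t + (k + α) • η t - k • r t) (Ici tM) t)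
    (hθt : ∀ t ∈ Ici tM, HasDerivWithinAt θt
      (-(kθ • Matrix.toEuclideanLin (Γ t) (Matrix.toEuclideanLin (𝒢 t) (θt t)))) (Ici tM) t)
    (hΓ : ∀ t ∈ Ici tM,
      HasDerivWithinAt Γ (β₁ • Γ t - kθ • (Γ t * 𝒢 t * Γ t)) (Ici tM) t)
    (hΓlo : ∀ t ∈ Ici tM, (Γ t - γlo • (1 : Matrix (Fin N) (Fin N) ℝ)).PosSemidef)
    (hΓhi : ∀ t ∈ Ici tM, (γhi • (1 : Matrix (Fin N) (Fin N) ℝ) - Γ t).PosSemidef)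
    (h𝒢 : ∀ t ∈ Ici tM, ∀ v : EuclideanSpace ℝ (Fin N),
      clo * ‖v‖ ^ 2 ≤ (inner ℝ v (Matrix.toEuclideanLin (𝒢 t) v) : ℝ))
    (hY : ∀ t ∈ Ici tM, ∀ x : EuclideanSpace ℝ (Fin N),
      ‖Matrix.toEuclideanLin (Y t) x‖ ≤ Ybar * ‖x‖) :
    ∃ ϖ : ℝ, 0 < ϖ ∧
      (∀ t ∈ Ici tM,
        (1 / 2) * (‖pt t‖ ^ 2 + ‖η t‖ ^ 2 + ‖r t‖ ^ 2)
            + (1 / 2) * (inner ℝ (θt t) (Matrix.toEuclideanLin (Γ t)⁻¹ (θt t)) : ℝ) ≤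
          ((1 / 2) * (‖pt tM‖ ^ 2 + ‖η tM‖ ^ 2 + ‖r tM‖ ^ 2)
            + (1 / 2) * (inner ℝ (θt tM) (Matrix.toEuclideanLin (Γ tM)⁻¹ (θt tM)) : ℝ))
            * Real.exp (-ϖ * (t - tM))) ∧
      ∃ C κ : ℝ, 0 < κ ∧ ∀ t ∈ Ici tM,
        ‖pt t‖ ≤ C * Real.exp (-κ * (t - tM)) ∧
        ‖qt t‖ ≤ C * Real.exp (-κ * (t - tM)) ∧
        ‖θt t‖ ≤ C * Real.exp (-κ * (t - tM)) := by
  obtain ⟨ε, hε, hneg⟩ := exists_pos_lyapunov_derivative_le (E := EuclideanSpace ℝ (Fin n))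
    (F := EuclideanSpace ℝ (Fin N)) hα hk hkθ hclo hβ hgain
  have hdecay := le_mul_exp_of_hasDerivWithinAt_le fun t ht =>
    exists_hasDerivWithinAt_lyapunov_le (hqdef t) (hp t ht) (hη t ht) (hr t ht) (hθt t ht)
      (hΓ t ht) (hΓlo t ht) hγlo hβ₁ hε.le (hneg _ _ _ _ _ _ (hY t ht _) (h𝒢 t ht _))
  refine ⟨2 * ε * min 1 γlo, by positivity, hdecay, ?_⟩
  have hγhi : 0 < γhi := hγlo.trans_le hγ
  simpa only [hqdef] using exists_norm_le_mul_exp_of_lyapunov_le (by positivity) hα hγhi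
    (fun t ht => (hΓlo t ht).norm_sq_div_le_inner_toEuclideanLin_inv hγlo (hΓhi t ht) hγhi (θt t))
    hdecay

/-- Theorem 1 (exponential convergence phase): under the observer/estimator error dynamics
`p̃' = q̃`, `η' = −βη − kr − αq̃`, `r' = Yθ̃ − p̃ + (k+α)η − kr`, `θ̃' = −k_θ Γ 𝒢 θ̃` on
`[t_M, ∞)`, with `q̃ = r − αp̃ − η`, `Γ` symmetric, differentiable, satisfying
`Γ̇ = β₁Γ − k_θ Γ 𝒢 Γ` (`β₁ ≥ 0`) and `γ̲ I ⪯ Γ ⪯ γ̄ I` (`0 < γ̲ ≤ γ̄`), `𝒢(t)` symmetric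
with `θ̃ᵀ𝒢(t)θ̃ ≥ c̲‖θ̃‖²` (`c̲ > 0`), `‖Y(t)‖ ≤ Ȳ` (operator norm), and gains `α > 0`,
`k > 0`, `k_θ > 0`, `β > (1+α²)²/(4α)`, `k·k_θ·c̲ > Ȳ²/2`, the Lyapunov function
`V = (1/2)(‖p̃‖² + ‖η‖² + ‖r‖²) + (1/2) θ̃ᵀΓ⁻¹θ̃` decays as `V(t) ≤ V(t_M) e^{−ϖ(t−t_M)}`
for some `ϖ > 0`, and `‖p̃‖, ‖q̃‖, ‖θ̃‖` converge exponentially to zero. -/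
theorem exponential_convergence {n N : ℕ} (tM : ℝ)
    (pt η r : ℝ → EuclideanSpace ℝ (Fin n))
    (θt : ℝ → EuclideanSpace ℝ (Fin N))
    (Y : ℝ → Matrix (Fin n) (Fin N) ℝ)
    (Γ 𝒢 : ℝ → Matrix (Fin N) (Fin N) ℝ)
    (α β k kθ β₁ γlo γhi clo Ybar : ℝ)
    (hα : 0 < α) (hk : 0 < k) (hkθ : 0 < kθ) (hβ₁ : 0 ≤ β₁)
    (hγlo : 0 < γlo) (hγ : γlo ≤ γhi) (hclo : 0 < clo)
    (hβ : (1 + α ^ 2) ^ 2 / (4 * α) < β)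
    (hgain : Ybar ^ 2 / 2 < k * kθ * clo)
    (qt : ℝ → EuclideanSpace ℝ (Fin n))
    (hqdef : ∀ t, qt t = r t - α • pt t - η t)
    (hp : ∀ t ∈ Ici tM, HasDerivWithinAt pt (qt t) (Ici tM) t)
    (hη : ∀ t ∈ Ici tM, HasDerivWithinAt η (-β • η t - k • r t - α • qt t) (Ici tM) t)
    (hr : ∀ t ∈ Ici tM, HasDerivWithinAt r
      (Matrix.toEuclideanLin (Y t) (θt t) - pt t + (k + α) • η t - k • r t) (Ici tM) t)
    (hθt : ∀ t ∈ Ici tM, HasDerivWithinAt θt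
      (-(kθ • Matrix.toEuclideanLin (Γ t) (Matrix.toEuclideanLin (𝒢 t) (θt t)))) (Ici tM) t)
    (hΓsymm : ∀ t ∈ Ici tM, (Γ t).IsSymm)
    (hΓ : ∀ t ∈ Ici tM,
      HasDerivWithinAt Γ (β₁ • Γ t - kθ • (Γ t * 𝒢 t * Γ t)) (Ici tM) t)
    (hΓlo : ∀ t ∈ Ici tM, (Γ t - γlo • (1 : Matrix (Fin N) (Fin N) ℝ)).PosSemidef)
    (hΓhi : ∀ t ∈ Ici tM, (γhi • (1 : Matrix (Fin N) (Fin N) ℝ) - Γ t).PosSemidef)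
    (h𝒢symm : ∀ t ∈ Ici tM, (𝒢 t).IsSymm)
    (h𝒢 : ∀ t ∈ Ici tM, ∀ v : EuclideanSpace ℝ (Fin N),
      clo * ‖v‖ ^ 2 ≤ (inner ℝ v (Matrix.toEuclideanLin (𝒢 t) v) : ℝ))
    (hY : ∀ t ∈ Ici tM, ∀ x : EuclideanSpace ℝ (Fin N),
      ‖Matrix.toEuclideanLin (Y t) x‖ ≤ Ybar * ‖x‖) :
    ∃ ϖ : ℝ, 0 < ϖ ∧
      (∀ t ∈ Ici tM,
        (1 / 2) * (‖pt t‖ ^ 2 + ‖η t‖ ^ 2 + ‖r t‖ ^ 2)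
            + (1 / 2) * (inner ℝ (θt t) (Matrix.toEuclideanLin (Γ t)⁻¹ (θt t)) : ℝ) ≤
          ((1 / 2) * (‖pt tM‖ ^ 2 + ‖η tM‖ ^ 2 + ‖r tM‖ ^ 2)
            + (1 / 2) * (inner ℝ (θt tM) (Matrix.toEuclideanLin (Γ tM)⁻¹ (θt tM)) : ℝ))
            * Real.exp (-ϖ * (t - tM))) ∧
      ∃ C κ : ℝ, 0 < κ ∧ ∀ t ∈ Ici tM,
        ‖pt t‖ ≤ C * Real.exp (-κ * (t - tM)) ∧
        ‖qt t‖ ≤ C * Real.exp (-κ * (t - tM)) ∧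
        ‖θt t‖ ≤ C * Real.exp (-κ * (t - tM)) :=
  exponential_convergence_general tM pt η r θt Y Γ 𝒢 α β k kθ β₁ γlo γhi clo Ybar hα hk hkθ hβ₁ hγlo
    hγ hclo hβ hgain qt hqdef hp hη hr hθt hΓ hΓlo hΓhi h𝒢 hY
end
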